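/- arXiv:1402.3784 — 2 statements merged into one kernel-verified Lean document; each statement's English description precedes it below -/
import Mathlib

section
/- For any α ≥ 2, ∫_{ℝ²} 2α² |y|^{α-2}/(1+|y|^α)² · (1-|y|^α)/(1+|y|^α) · ln((1+|y|^α)²) dy = -4πα. -/
/-!
In polar coordinates the integral is `2π ∫₀^∞ r f(r) dr`. With `u = 1 + r^α` one has
`r f(r) dr = 4α · log u · (2 - u) / u³ du`, and `log u · (2 - u) / u³` has the elementary primitive
`G(u) = log u · (u⁻¹ - u⁻²) + u⁻¹ - u⁻² / 2`, which tends to `0` at infinity and equals `1/2` at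
`u = 1`. Hence `∫₀^∞ r f(r) dr = -2α`. Integrability comes from continuity near `r = 0` and
from `f ≤ 0` on `r ≥ 1`.
-/

open Real MeasureTheory Filter Set Topology

theorem integral_fun_norm_euclideanSpace_fin_two (f : ℝ → ℝ) :
    ∫ y : EuclideanSpace ℝ (Fin 2), f ‖y‖ = 2 * π * ∫ r in Ioi (0 : ℝ), r * f r := by
  rw [integral_fun_norm_addHaar, finrank_euclideanSpace_fin, measureReal_def,
    EuclideanSpace.volume_ball_fin_two]
  simp [mul_assoc, pi_nonneg]

theorem integral_Ioi_of_hasDerivAt_of_nonpos_of_le {f f' : ℝ → ℝ} {a b m : ℝ} (hab : a ≤ b)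
    (hderiv : ∀ x ∈ Ici a, HasDerivAt f (f' x) x) (hint : IntegrableOn f' (Ioc a b))
    (hnonpos : ∀ x ∈ Ioi b, f' x ≤ 0) (hf : Tendsto f atTop (𝓝 m)) :
    ∫ x in Ioi a, f' x = m - f a := by
  have hint_Ioi : IntegrableOn f' (Ioi b) :=
    integrableOn_Ioi_deriv_of_nonpos' (fun x hx => hderiv x (hab.trans hx)) hnonpos hf
  refine integral_Ioi_of_hasDerivAt_of_tendsto' hderiv ?_ hf
  rw [← Ioc_union_Ioi_eq_Ioi hab]
  exact hint.union hint_Ioi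

noncomputable def liouvillePrimitive (u : ℝ) : ℝ :=
  log u * (u⁻¹ - (u ^ 2)⁻¹) + u⁻¹ - (u ^ 2)⁻¹ / 2

theorem hasDerivAt_liouvillePrimitive {u : ℝ} (hu : u ≠ 0) :
    HasDerivAt liouvillePrimitive (log u * (2 - u) / u ^ 3) u := by
  have hinv : HasDerivAt (fun u : ℝ => u⁻¹) (-(u ^ 2)⁻¹) u := hasDerivAt_inv hu
  have hinv_sq : HasDerivAt (fun u : ℝ => (u ^ 2)⁻¹) (-(2 * u ^ 1 * 1) / (u ^ 2) ^ 2) u :=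
    ((hasDerivAt_id u).pow 2).inv (pow_ne_zero 2 hu)
  refine ((((hasDerivAt_log hu).mul (hinv.sub hinv_sq)).add hinv).sub
    (hinv_sq.div_const 2)).congr_deriv ?_
  simp only [Pi.sub_apply]
  field_simp
  ring

theorem tendsto_liouvillePrimitive_atTop : Tendsto liouvillePrimitive atTop (𝓝 0) := by
  have hinv : Tendsto (fun u : ℝ => u⁻¹) atTop (𝓝 0) := tendsto_inv_atTop_zero
  have hinv_sq : Tendsto (fun u : ℝ => (u ^ 2)⁻¹) atTop (𝓝 0) := by
    simpa [inv_pow] using hinv.pow 2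
  have hlog : Tendsto (fun u : ℝ => log u * u⁻¹) atTop (𝓝 0) := by
    simpa [div_eq_mul_inv] using isLittleO_log_id_atTop.tendsto_div_nhds_zero
  have hlog_sq : Tendsto (fun u : ℝ => log u * (u ^ 2)⁻¹) atTop (𝓝 0) := by
    simpa [inv_pow, sq, ← mul_assoc] using hlog.mul hinv
  have h := ((hlog.sub hlog_sq).add hinv).sub (hinv_sq.div_const 2)
  rw [sub_zero, add_zero, zero_div, sub_zero] at h
  refine h.congr fun u => ?_
  simp only [liouvillePrimitive, mul_sub]

theorem liouvillePrimitive_one : liouvillePrimitive 1 = 1 / 2 := by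
  norm_num [liouvillePrimitive]

noncomputable def liouvilleRadial (α r : ℝ) : ℝ :=
  2 * α ^ 2 * r ^ (α - 2) / (1 + r ^ α) ^ 2 * ((1 - r ^ α) / (1 + r ^ α)) *
    log ((1 + r ^ α) ^ 2)

theorem hasDerivAt_liouvillePrimitive_one_add_rpow {α r : ℝ} (hα : 1 < α) (hr : 0 ≤ r) :
    HasDerivAt (fun r => 4 * α * liouvillePrimitive (1 + r ^ α)) (r * liouvilleRadial α r) r := by
  have hu : 0 < 1 + r ^ α := by positivity
  have hrpow : r ^ (α - 1) = r * r ^ (α - 2) := by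
    rw [← rpow_one_add' hr (by linarith)]
    ring_nf
  refine (((hasDerivAt_liouvillePrimitive hu.ne').comp r
    ((hasDerivAt_rpow_const (Or.inr hα.le)).const_add 1)).const_mul (4 * α)).congr_deriv ?_
  rw [liouvilleRadial, log_pow, hrpow]
  field_simp
  ring

theorem continuousOn_mul_liouvilleRadial {α : ℝ} (hα : 2 ≤ α) :
    ContinuousOn (fun r => r * liouvilleRadial α r) (Ici 0) := by
  have hu : ∀ r ∈ Ici (0 : ℝ), 1 + r ^ α ≠ 0 := fun r hr => by
    have := rpow_nonneg (mem_Ici.mp hr) α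
    positivity
  have hu_sq : ∀ r ∈ Ici (0 : ℝ), (1 + r ^ α) ^ 2 ≠ 0 := fun r hr => pow_ne_zero 2 (hu r hr)
  unfold liouvilleRadial
  fun_prop (disch := first | assumption | linarith)

theorem liouvilleRadial_nonpos {α r : ℝ} (hα : 0 ≤ α) (hr : 1 ≤ r) : liouvilleRadial α r ≤ 0 := by
  have hrα : 1 ≤ r ^ α := one_le_rpow hr hα
  have hlog : 0 ≤ log ((1 + r ^ α) ^ 2) := log_nonneg (by nlinarith)
  have hZ : (1 - r ^ α) / (1 + r ^ α) ≤ 0 := div_nonpos_of_nonpos_of_nonneg (by linarith) (by linarith)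
  have hK : 0 ≤ 2 * α ^ 2 * r ^ (α - 2) / (1 + r ^ α) ^ 2 := by positivity
  exact mul_nonpos_of_nonpos_of_nonneg (mul_nonpos_of_nonneg_of_nonpos hK hZ) hlog

theorem integral_mul_liouvilleRadial {α : ℝ} (hα : 2 ≤ α) :
    ∫ r in Ioi (0 : ℝ), r * liouvilleRadial α r = -(2 * α) := by
  have hint : IntegrableOn (fun r => r * liouvilleRadial α r) (Ioc 0 1) :=
    ((continuousOn_mul_liouvilleRadial hα).mono Icc_subset_Ici_self).integrableOn_Icc.mono_set
      Ioc_subset_Icc_self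
  have hlim : Tendsto (fun r : ℝ => 4 * α * liouvillePrimitive (1 + r ^ α)) atTop (𝓝 (4 * α * 0)) :=
    (tendsto_liouvillePrimitive_atTop.comp
      (tendsto_atTop_add_const_left _ 1 (tendsto_rpow_atTop (by linarith)))).const_mul _
  rw [integral_Ioi_of_hasDerivAt_of_nonpos_of_le zero_le_one
    (fun r hr => hasDerivAt_liouvillePrimitive_one_add_rpow (by linarith) hr) hint
    (fun r hr => mul_nonpos_of_nonneg_of_nonpos (by linarith [mem_Ioi.mp hr])
      (liouvilleRadial_nonpos (by linarith) (mem_Ioi.mp hr).le)) hlim]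
  rw [zero_rpow (by linarith), add_zero, liouvillePrimitive_one]
  ring

theorem stmt_3 (α : ℝ) (hα : 2 ≤ α) :
    (∫ y : EuclideanSpace ℝ (Fin 2),
        2 * α ^ 2 * ‖y‖ ^ (α - 2) / (1 + ‖y‖ ^ α) ^ 2 *
          ((1 - ‖y‖ ^ α) / (1 + ‖y‖ ^ α)) * Real.log ((1 + ‖y‖ ^ α) ^ 2)) =
      -(4 * Real.pi * α) := by
  calc _ = 2 * π * ∫ r in Ioi (0 : ℝ), r * liouvilleRadial α r :=
        integral_fun_norm_euclideanSpace_fin_two (liouvilleRadial α)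
    _ = -(4 * π * α) := by rw [integral_mul_liouvilleRadial hα]; ring
end

section
/- For any α ≥ 2 and δ > 0, the function Z(x) = (δ^α - |x|^α)/(δ^α + |x|^α) satisfies -ΔZ = 2α² δ^α |x|^{α-2}/(δ^α + |x|^α)² · Z on ℝ² \ {0}. -/
open Real MeasureTheory

/-- The Laplacian of a function on `ℝ²`, as the sum of the second partial
derivatives along the standard basis directions. -/
noncomputable def laplacian (f : EuclideanSpace ℝ (Fin 2) → ℝ)
    (x : EuclideanSpace ℝ (Fin 2)) : ℝ :=
  ∑ i : Fin 2,
    fderiv ℝ (fun y => fderiv ℝ f y (EuclideanSpace.single i 1)) x (EuclideanSpace.single i 1)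

/-!
Write `Z y = h (‖y‖ ^ 2)` with `h s = (A - s ^ β) / (A + s ^ β)`, `A = δ ^ α`, `β = α / 2`.
Since `‖·‖²` is smooth with gradient `2 y`, the chain rule gives, in the plane,
`Δ (h ∘ ‖·‖²) = 4 (h' s + s h'' s)` at `s = ‖x‖²`, and for this `h` one computes
`h' s + s h'' s = -2 A β² s ^ (β - 1) (A - s ^ β) / (A + s ^ β) ^ 3`.
-/

open Filter Topology
open scoped RealInnerProductSpace

section RadialNormSq

variable {E : Type*} [NormedAddCommGroup E] [InnerProductSpace ℝ E]

theorem HasDerivAt.hasFDerivAt_comp_norm_sq {h : ℝ → ℝ} {d : ℝ} {x : E}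
    (hh : HasDerivAt h d (‖x‖ ^ 2)) :
    HasFDerivAt (fun y => h (‖y‖ ^ 2)) ((2 * d) • innerSL ℝ x) x :=
  (hh.comp_hasFDerivAt x (hasStrictFDerivAt_norm_sq x).hasFDerivAt).congr_fderiv (by module)

theorem fderiv_fderiv_comp_norm_sq_apply {h h' : ℝ → ℝ} {h'' : ℝ} {x : E} (v : E)
    (hh : ∀ᶠ t in 𝓝 (‖x‖ ^ 2), HasDerivAt h (h' t) t) (hh' : HasDerivAt h' h'' (‖x‖ ^ 2)) :
    fderiv ℝ (fun y => fderiv ℝ (fun z => h (‖z‖ ^ 2)) y v) x v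
      = 4 * h'' * ⟪x, v⟫ ^ 2 + 2 * h' (‖x‖ ^ 2) * ‖v‖ ^ 2 := by
  have hfirst : (fun y => fderiv ℝ (fun z => h (‖z‖ ^ 2)) y v)
      =ᶠ[𝓝 x] fun y => 2 * h' (‖y‖ ^ 2) * ⟪v, y⟫ := by
    have hcont : Tendsto (fun y : E => ‖y‖ ^ 2) (𝓝 x) (𝓝 (‖x‖ ^ 2)) :=
      (continuous_norm.pow 2).tendsto x
    filter_upwards [hcont.eventually hh] with y hy
    simp [hy.hasFDerivAt_comp_norm_sq.fderiv, real_inner_comm]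
  have hsecond : HasFDerivAt (fun y => 2 * h' (‖y‖ ^ 2) * ⟪v, y⟫) _ x :=
    (hh'.hasFDerivAt_comp_norm_sq.const_mul 2).mul (innerSL ℝ v).hasFDerivAt
  rw [hfirst.fderiv_eq, hsecond.fderiv]
  simp [real_inner_comm]
  ring

end RadialNormSq

theorem laplacian_comp_norm_sq {h h' : ℝ → ℝ} {h'' : ℝ} {x : EuclideanSpace ℝ (Fin 2)}
    (hh : ∀ᶠ t in 𝓝 (‖x‖ ^ 2), HasDerivAt h (h' t) t) (hh' : HasDerivAt h' h'' (‖x‖ ^ 2)) :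
    laplacian (fun y => h (‖y‖ ^ 2)) x = 4 * (h' (‖x‖ ^ 2) + ‖x‖ ^ 2 * h'') := by
  simp only [laplacian, fderiv_fderiv_comp_norm_sq_apply _ hh hh',
    EuclideanSpace.inner_single_right, PiLp.norm_single, Fin.sum_univ_two]
  rw [EuclideanSpace.real_norm_sq_eq x, Fin.sum_univ_two]
  simp
  ring

section Profile

variable {A β t : ℝ}

theorem hasDerivAt_sub_rpow_div_add_rpow (ht : t ≠ 0) (hA : A + t ^ β ≠ 0) :
    HasDerivAt (fun s => (A - s ^ β) / (A + s ^ β))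
      (-(2 * A * β) * (t ^ (β - 1) / (A + t ^ β) ^ 2)) t := by
  have hp : HasDerivAt (fun s : ℝ => s ^ β) (β * t ^ (β - 1)) t :=
    hasDerivAt_rpow_const (Or.inl ht)
  refine ((hp.const_sub A).div (hp.const_add A) hA).congr_deriv ?_
  field_simp
  ring

theorem hasDerivAt_rpow_sub_one_div_add_rpow_sq (ht : t ≠ 0) (hA : A + t ^ β ≠ 0) :
    HasDerivAt (fun s => s ^ (β - 1) / (A + s ^ β) ^ 2)
      (t ^ (β - 1) * ((β - 1) * (A + t ^ β) - 2 * β * t ^ β) / (t * (A + t ^ β) ^ 3)) t := by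
  have hp : HasDerivAt (fun s : ℝ => s ^ β) (β * t ^ (β - 1)) t :=
    hasDerivAt_rpow_const (Or.inl ht)
  have hq : HasDerivAt (fun s : ℝ => s ^ (β - 1)) ((β - 1) * t ^ (β - 1 - 1)) t :=
    hasDerivAt_rpow_const (Or.inl ht)
  refine (hq.div ((hp.const_add A).pow 2) (pow_ne_zero 2 hA)).congr_deriv ?_
  simp only [Pi.pow_apply]
  rw [rpow_sub_one ht (β - 1), rpow_sub_one ht β]
  field_simp
  ring

end Profile

theorem sq_rpow_half {r : ℝ} (hr : 0 ≤ r) (γ : ℝ) : (r ^ 2) ^ (γ / 2) = r ^ γ := by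
  rw [← rpow_natCast_mul hr]
  ring_nf

theorem stmt_5_general (α δ : ℝ) (hδ : 0 < δ) :
    ∀ x : EuclideanSpace ℝ (Fin 2), x ≠ 0 →
      -laplacian (fun y => (δ ^ α - ‖y‖ ^ α) / (δ ^ α + ‖y‖ ^ α)) x =
        2 * α ^ 2 * δ ^ α * ‖x‖ ^ (α - 2) / (δ ^ α + ‖x‖ ^ α) ^ 2 *
          ((δ ^ α - ‖x‖ ^ α) / (δ ^ α + ‖x‖ ^ α)) := by
  intro x hx
  have hA : 0 < δ ^ α := rpow_pos_of_pos hδ α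
  have hs : 0 < ‖x‖ ^ 2 := by positivity
  have hden : ∀ t : ℝ, 0 < t → δ ^ α + t ^ (α / 2) ≠ 0 := fun t ht =>
    (add_pos hA (rpow_pos_of_pos ht _)).ne'
  have hradial : (fun y : EuclideanSpace ℝ (Fin 2) => (δ ^ α - ‖y‖ ^ α) / (δ ^ α + ‖y‖ ^ α))
      = fun y => (fun s => (δ ^ α - s ^ (α / 2)) / (δ ^ α + s ^ (α / 2))) (‖y‖ ^ 2) := by
    simp only [sq_rpow_half (norm_nonneg _)]
  have hh : ∀ᶠ t in 𝓝 (‖x‖ ^ 2), HasDerivAt (fun s => (δ ^ α - s ^ (α / 2)) / (δ ^ α + s ^ (α / 2)))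
      (-(2 * δ ^ α * (α / 2)) * (t ^ (α / 2 - 1) / (δ ^ α + t ^ (α / 2)) ^ 2)) t := by
    filter_upwards [Ioi_mem_nhds hs] with t ht
    exact hasDerivAt_sub_rpow_div_add_rpow ht.ne' (hden t ht)
  rw [hradial, laplacian_comp_norm_sq hh
    ((hasDerivAt_rpow_sub_one_div_add_rpow_sq hs.ne' (hden _ hs)).const_mul _)]
  rw [sq_rpow_half (norm_nonneg x), rpow_sub_one hs.ne', sq_rpow_half (norm_nonneg x),
    rpow_sub (norm_pos_iff.mpr hx), rpow_two]
  field_simp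
  ring

theorem stmt_5 (α δ : ℝ) (hα : 2 ≤ α) (hδ : 0 < δ) :
    ∀ x : EuclideanSpace ℝ (Fin 2), x ≠ 0 →
      -laplacian (fun y => (δ ^ α - ‖y‖ ^ α) / (δ ^ α + ‖y‖ ^ α)) x =
        2 * α ^ 2 * δ ^ α * ‖x‖ ^ (α - 2) / (δ ^ α + ‖x‖ ^ α) ^ 2 *
          ((δ ^ α - ‖x‖ ^ α) / (δ ^ α + ‖x‖ ^ α)) :=
  stmt_5_general α δ hδ
end
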